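/- arXiv:1807.03107 — 6 statements merged into one kernel-verified Lean document; each statement's English description precedes it below -/
import Mathlib

section
/- Let U ⊆ ℝ^r and V ⊆ ℝ^s be open with 0 ∈ V, and let F₀ : U×V → ℝ^{r×s} and G₀ : U×V → ℝ^{s×s} be C^∞ with G₀(x,y) invertible for all (x,y) ∈ U×V. Define ψ : U×V → ℝ^r by ψ(x,y) = x − F₀(x,y)G₀(x,y)^{-1}y, and the fast vector field v(x,y) = (F₀(x,y)y, G₀(x,y)y). Then the Lie derivative L(x,y) := Dψ(x,y)·v(x,y) vanishes to second order in y: L(x,0) = 0 and the partial derivative of L with respect to y satisfies D₂L(x,0) = 0 for all x ∈ U. In particular, each entry of ψ is a first integral of the fast system ẋ = F₀(x,y)y, ẏ = G₀(x,y)y up to terms of order two in y. -/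
/-!
With `M = F₀ G₀⁻¹` we have `Dψ(p)·w = w₁ - M(p) w₂ - (DM(p)·w) y`. Along `v` the first two
terms cancel because `M G₀ y = F₀ y`, leaving `L(x, y) = -(DM(x, y)·v(x, y)) y`: a bilinear
expression in two factors that both vanish at `y = 0` (as `v(x, 0) = 0`). Such a product vanishes
together with its first derivative there.
-/

open Matrix Filter Topology

section MatrixSmoothness

variable {𝕜 E : Type*} [NontriviallyNormedField 𝕜] [NormedAddCommGroup E] [NormedSpace 𝕜 E]
  {ι κ μ : Type*} [Fintype ι] [Fintype κ] [Fintype μ] {n : WithTop ℕ∞} {s : Set E}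

theorem ContDiffOn.matrix_mul {A : E → Matrix ι κ 𝕜} {B : E → Matrix κ μ 𝕜}
    (hA : ContDiffOn 𝕜 n (fun p i j => A p i j) s) (hB : ContDiffOn 𝕜 n (fun p i j => B p i j) s) :
    ContDiffOn 𝕜 n (fun p i j => (A p * B p) i j) s := by
  refine contDiffOn_pi' fun i => contDiffOn_pi' fun j => ?_
  simp only [mul_apply]
  exact ContDiffOn.sum fun k _ =>
    ((contDiffOn_pi.mp (contDiffOn_pi.mp hA i) k)).mul (contDiffOn_pi.mp (contDiffOn_pi.mp hB k) j)

theorem ContDiffOn.matrix_mulVec {A : E → Matrix ι κ 𝕜} {w : E → κ → 𝕜}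
    (hA : ContDiffOn 𝕜 n (fun p i j => A p i j) s) (hw : ContDiffOn 𝕜 n w s) :
    ContDiffOn 𝕜 n (fun p => A p *ᵥ w p) s := by
  refine contDiffOn_pi' fun i => ?_
  simp only [mulVec, dotProduct]
  exact ContDiffOn.sum fun k _ =>
    ((contDiffOn_pi.mp (contDiffOn_pi.mp hA i) k)).mul (contDiffOn_pi.mp hw k)

variable [DecidableEq ι]

theorem ContDiffOn.matrix_det {A : E → Matrix ι ι 𝕜}
    (hA : ContDiffOn 𝕜 n (fun p i j => A p i j) s) : ContDiffOn 𝕜 n (fun p => (A p).det) s := by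
  simp only [det_apply']
  exact ContDiffOn.sum fun σ _ => contDiffOn_const.mul
    (contDiffOn_prod fun i _ => contDiffOn_pi.mp (contDiffOn_pi.mp hA (σ i)) i)

theorem ContDiffOn.matrix_adjugate {A : E → Matrix ι ι 𝕜}
    (hA : ContDiffOn 𝕜 n (fun p i j => A p i j) s) :
    ContDiffOn 𝕜 n (fun p i j => (A p).adjugate i j) s := by
  refine contDiffOn_pi' fun i => contDiffOn_pi' fun j => ?_
  simp only [adjugate_apply]
  refine ContDiffOn.matrix_det (A := fun p => (A p).updateRow j (Pi.single i 1)) ?_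
  refine contDiffOn_pi' fun k => ?_
  by_cases hk : k = j
  · simpa [hk] using contDiffOn_const
  · simpa [updateRow_ne hk] using contDiffOn_pi.mp hA k

theorem ContDiffOn.matrix_inv {A : E → Matrix ι ι 𝕜}
    (hA : ContDiffOn 𝕜 n (fun p i j => A p i j) s) (hunit : ∀ p ∈ s, IsUnit (A p)) :
    ContDiffOn 𝕜 n (fun p i j => (A p)⁻¹ i j) s := by
  have hdet : ContDiffOn 𝕜 n (fun p => (A p).det⁻¹) s :=
    hA.matrix_det.inv fun p hp => ((isUnit_iff_isUnit_det _).mp (hunit p hp)).ne_zero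
  simp only [inv_def, Ring.inverse_eq_inv', Matrix.smul_apply, smul_eq_mul]
  exact contDiffOn_pi' fun i => contDiffOn_pi' fun j =>
    hdet.mul (contDiffOn_pi.mp (contDiffOn_pi.mp hA.matrix_adjugate i) j)

end MatrixSmoothness

section Bilinear

variable {𝕜 E X Y A : Type*} [NontriviallyNormedField 𝕜]
  [NormedAddCommGroup E] [NormedSpace 𝕜 E]
  [NormedAddCommGroup X] [NormedSpace 𝕜 X] [NormedAddCommGroup Y] [NormedSpace 𝕜 Y]
  [NormedAddCommGroup A] [NormedSpace 𝕜 A] (B : A →L[𝕜] Y →L[𝕜] X)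

theorem ContinuousLinearMap.hasFDerivAt_of_bilinear_of_eq_zero {f : E → A} {g : E → Y} {x : E}
    (hf : DifferentiableAt 𝕜 f x) (hg : DifferentiableAt 𝕜 g x) (hf0 : f x = 0) (hg0 : g x = 0) :
    HasFDerivAt (fun y => B (f y) (g y)) (0 : E →L[𝕜] X) x := by
  convert B.hasFDerivAt_of_bilinear hf.hasFDerivAt hg.hasFDerivAt using 1
  ext1 w
  simp [hf0, hg0]

theorem fderiv_sub_bilinear_apply {N : X × Y → A} {p : X × Y} (hN : DifferentiableAt 𝕜 N p)
    (w : X × Y) :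
    fderiv 𝕜 (fun q => q.1 - B (N q) q.2) p w = w.1 - (B (N p) w.2 + B (fderiv 𝕜 N p w) p.2) := by
  have hψ : HasFDerivAt (fun q : X × Y => q.1 - B (N q) q.2)
      (.fst 𝕜 X Y - (B.precompR _ (N p) (.snd 𝕜 X Y) + B.precompL _ (fderiv 𝕜 N p) p.2)) p :=
    hasFDerivAt_fst.sub (B.hasFDerivAt_of_bilinear hN.hasFDerivAt hasFDerivAt_snd)
  simp [hψ.fderiv]

theorem hasFDerivAt_lieDeriv_sub_bilinear_zero {N : X × Y → A} {v : X × Y → X × Y} {x : X}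
    (hN : ContDiffAt 𝕜 2 N (x, 0)) (hv : DifferentiableAt 𝕜 v (x, 0)) (hv0 : v (x, 0) = 0)
    (hcancel : ∀ᶠ q in 𝓝 (x, 0), B (N q) (v q).2 = (v q).1) :
    HasFDerivAt (fun y => fderiv 𝕜 (fun q => q.1 - B (N q) q.2) (x, y) (v (x, y)))
      (0 : Y →L[𝕜] X) 0 := by
  have hι : HasFDerivAt (fun y : Y => (x, y)) ((0 : Y →L[𝕜] X).prod (.id 𝕜 Y)) 0 :=
    (hasFDerivAt_const x 0).prodMk (hasFDerivAt_id 0)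
  have hlie : ∀ᶠ q in 𝓝 (x, 0),
      fderiv 𝕜 (fun q => q.1 - B (N q) q.2) q (v q) = -B (fderiv 𝕜 N q (v q)) q.2 := by
    filter_upwards [hN.eventually (by simp), hcancel] with q hNq hq
    rw [fderiv_sub_bilinear_apply B (hNq.differentiableAt (by norm_num)), hq]
    abel
  have hDN : DifferentiableAt 𝕜 (fderiv 𝕜 N) (x, 0) :=
    (hN.fderiv_right (m := 1) (by norm_num)).differentiableAt one_ne_zero
  have hΦ : DifferentiableAt 𝕜 (fun y : Y => fderiv 𝕜 N (x, y) (v (x, y))) 0 :=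
    (hDN.comp 0 hι.differentiableAt).clm_apply (hv.comp 0 hι.differentiableAt)
  have hzero := (B.hasFDerivAt_of_bilinear_of_eq_zero hΦ differentiableAt_id
    (by simp [hv0]) rfl).neg
  rw [neg_zero] at hzero
  exact hzero.congr_of_eventuallyEq (hι.continuousAt.eventually hlie)

end Bilinear

section MulVec

variable (𝕜 : Type*) [NontriviallyNormedField 𝕜] [CompleteSpace 𝕜]
  (ι κ : Type*) [Fintype ι] [Fintype κ]

noncomputable def Matrix.mulVecCLM : (ι → κ → 𝕜) →L[𝕜] (κ → 𝕜) →L[𝕜] (ι → 𝕜) :=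
  LinearMap.toContinuousLinearMap
    (LinearMap.toContinuousLinearMap.toLinearMap ∘ₗ mulVecBilin 𝕜 𝕜)

variable {𝕜 ι κ}

@[simp]
theorem Matrix.mulVecCLM_apply (M : Matrix ι κ 𝕜) (w : κ → 𝕜) : mulVecCLM 𝕜 ι κ M w = M *ᵥ w :=
  rfl

end MulVec

/-- For smooth `F₀, G₀` with `G₀` invertible, each entry of
`ψ(x,y) = x − F₀(x,y)G₀(x,y)⁻¹y` is a first integral of the fast system
`ẋ = F₀(x,y)y`, `ẏ = G₀(x,y)y` up to order two in `y`: the Lie derivative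
`L = Dψ·v` satisfies `L(x,0) = 0` and `D₂L(x,0) = 0` for all `x ∈ U`. -/
theorem stmt3 (r s : ℕ) (U : Set (Fin r → ℝ)) (V : Set (Fin s → ℝ))
    (hU : IsOpen U) (hV : IsOpen V) (hV0 : (0 : Fin s → ℝ) ∈ V)
    (F₀ : (Fin r → ℝ) × (Fin s → ℝ) → Matrix (Fin r) (Fin s) ℝ)
    (G₀ : (Fin r → ℝ) × (Fin s → ℝ) → Matrix (Fin s) (Fin s) ℝ)
    (hF₀ : ContDiffOn ℝ (⊤ : ℕ∞) (fun p i j => F₀ p i j) (U ×ˢ V))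
    (hG₀ : ContDiffOn ℝ (⊤ : ℕ∞) (fun p i j => G₀ p i j) (U ×ˢ V))
    (hGinv : ∀ p ∈ U ×ˢ V, IsUnit (G₀ p)) :
    let ψ : (Fin r → ℝ) × (Fin s → ℝ) → Fin r → ℝ :=
      fun p => p.1 - (F₀ p * (G₀ p)⁻¹).mulVec p.2
    let v : (Fin r → ℝ) × (Fin s → ℝ) → (Fin r → ℝ) × (Fin s → ℝ) :=
      fun p => ((F₀ p).mulVec p.2, (G₀ p).mulVec p.2)
    let L : (Fin r → ℝ) × (Fin s → ℝ) → Fin r → ℝ :=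
      fun p => fderiv ℝ ψ p (v p)
    ∀ x ∈ U, L (x, 0) = 0 ∧ fderiv ℝ (fun y => L (x, y)) 0 = 0 := by
  intro ψ v L x hx
  have hW : U ×ˢ V ∈ 𝓝 (x, 0) := (hU.prod hV).mem_nhds ⟨hx, hV0⟩
  have hv0 : v (x, 0) = 0 := by simp [v]
  have hN : ContDiffAt ℝ 2 (fun p i j => (F₀ p * (G₀ p)⁻¹) i j) (x, 0) :=
    ((hF₀.matrix_mul (hG₀.matrix_inv hGinv)).contDiffAt hW).of_le (WithTop.coe_le_coe.mpr le_top)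
  have hv : DifferentiableAt ℝ v (x, 0) :=
    (((hF₀.matrix_mulVec contDiffOn_snd).prodMk (hG₀.matrix_mulVec contDiffOn_snd)).contDiffAt
      hW).differentiableAt (by simp)
  have hcancel : ∀ᶠ p in 𝓝 (x, 0),
      mulVecCLM ℝ (Fin r) (Fin s) (F₀ p * (G₀ p)⁻¹) (v p).2 = (v p).1 := by
    filter_upwards [hW] with p hp
    rw [mulVecCLM_apply, mulVec_mulVec,
      nonsing_inv_mul_cancel_right _ _ ((isUnit_iff_isUnit_det _).mp (hGinv p hp))]
  refine ⟨by simp [L, hv0], ?_⟩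
  exact (hasFDerivAt_lieDeriv_sub_bilinear_zero _ hN hv hv0 hcancel).fderiv
end

section
/- Let Ũ ⊆ ℝ^r be open, let s ≥ 2 and 0 < s₁ < s, and let G : Ũ → ℝ^{s×s} be C^∞ with rank G(x) = s₁ for all x ∈ Ũ. Then every x₀ ∈ Ũ has an open neighborhood U₀ ⊆ Ũ on which there exist C^∞ maps G̃ : U₀ → ℝ^{s×s₁} and R : U₀ → ℝ^{s₁×s}, each of rank s₁ at every point of U₀, such that G(x) = G̃(x)·R(x) for all x ∈ U₀. Moreover, after a suitable permutation of the columns of G, one may take G̃(x) to consist of s₁ columns of G(x) and R(x) = (A(x), I_{s₁}) for a C^∞ map A : U₀ → ℝ^{s₁×(s−s₁)}. -/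
/-!
Choose `s₁` linearly independent columns `G̃(x₀)` of `G(x₀)`. Their Gram matrix `G̃ᵀG̃` is
invertible at `x₀`, hence on a neighbourhood `U₀`, where `L = (G̃ᵀG̃)⁻¹G̃ᵀ` is a smooth left
inverse of `G̃`. As `rank G̃ = s₁ = rank G` on `U₀`, the columns of `G̃(x)` span the column space
of `G(x)`, so `G = G̃ (L G)`; and `R = L G` restricted to the chosen columns is `L G̃ = 1`.
-/

open Set Matrix

section Smoothness

variable {𝕜 E : Type*} [NontriviallyNormedField 𝕜] [NormedAddCommGroup E] [NormedSpace 𝕜 E]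
  {U : Set E} {N : WithTop ℕ∞} {l m n : Type*} [Fintype l] [Fintype m] [Fintype n]

theorem contDiffOn_matrix_iff {M : E → Matrix m n 𝕜} :
    ContDiffOn 𝕜 N (fun x i j => M x i j) U ↔ ∀ i j, ContDiffOn 𝕜 N (fun x => M x i j) U := by
  simp only [contDiffOn_pi]

theorem ContDiffOn.matrix_transpose {M : E → Matrix m n 𝕜}
    (hM : ContDiffOn 𝕜 N (fun x i j => M x i j) U) :
    ContDiffOn 𝕜 N (fun x i j => (M x)ᵀ i j) U :=
  contDiffOn_matrix_iff.2 fun i j => contDiffOn_matrix_iff.1 hM j i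

theorem ContDiffOn.matrix_mul_s4 {M : E → Matrix l m 𝕜} {M' : E → Matrix m n 𝕜}
    (hM : ContDiffOn 𝕜 N (fun x i j => M x i j) U)
    (hM' : ContDiffOn 𝕜 N (fun x i j => M' x i j) U) :
    ContDiffOn 𝕜 N (fun x i j => (M x * M' x) i j) U := by
  rw [contDiffOn_matrix_iff] at *
  intro i j
  simp only [mul_apply]
  exact ContDiffOn.sum fun k _ => (hM i k).mul (hM' k j)

theorem ContDiffOn.matrix_det_s4 [DecidableEq n] {M : E → Matrix n n 𝕜}
    (hM : ContDiffOn 𝕜 N (fun x i j => M x i j) U) :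
    ContDiffOn 𝕜 N (fun x => (M x).det) U := by
  simp only [det_apply']
  exact ContDiffOn.sum fun σ _ => contDiffOn_const.mul
    (contDiffOn_prod fun i _ => contDiffOn_matrix_iff.1 hM (σ i) i)

theorem ContDiffOn.matrix_updateRow [DecidableEq m] {M : E → Matrix m n 𝕜}
    (hM : ContDiffOn 𝕜 N (fun x i j => M x i j) U) (i : m) (v : n → 𝕜) :
    ContDiffOn 𝕜 N (fun x a b => (M x).updateRow i v a b) U := by
  refine contDiffOn_matrix_iff.2 fun a b => ?_
  by_cases ha : a = i
  · simpa only [ha, updateRow_self] using contDiffOn_const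
  · simpa only [updateRow_ne ha] using contDiffOn_matrix_iff.1 hM a b

theorem ContDiffOn.matrix_inv_s4 [DecidableEq n] {M : E → Matrix n n 𝕜}
    (hM : ContDiffOn 𝕜 N (fun x i j => M x i j) U) (hdet : ∀ x ∈ U, (M x).det ≠ 0) :
    ContDiffOn 𝕜 N (fun x i j => (M x)⁻¹ i j) U := by
  refine contDiffOn_matrix_iff.2 fun i j => ?_
  simp only [inv_def, Matrix.smul_apply, Ring.inverse_eq_inv, Matrix.adjugate_apply, smul_eq_mul]
  exact (hM.matrix_det_s4.inv hdet).mul (hM.matrix_updateRow j _).matrix_det_s4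

end Smoothness

theorem Fin.exists_sumEquiv_inr_eq {k n : ℕ} {ι : Fin k → Fin n} (hι : Function.Injective ι) :
    ∃ e : Fin (n - k) ⊕ Fin k ≃ Fin n, ∀ i, e (Sum.inr i) = ι i := by
  have hcard : Fintype.card {j // j ∉ Set.range ι} = n - k := by
    rw [Fintype.card_subtype_compl, Fintype.card_fin, Set.card_range_of_injective hι,
      Fintype.card_fin]
  exact ⟨(Equiv.sumComm _ _).trans (((Equiv.ofInjective ι hι).sumCongr
    (Fintype.equivFinOfCardEq hcard).symm).trans (Equiv.sumCompl (· ∈ Set.range ι))),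
    fun _ => rfl⟩

namespace Matrix

variable {m n k R K : Type*} [Fintype n] [Fintype k]

theorem exists_mul_eq_of_range_le [CommSemiring R] [DecidableEq n] {C : Matrix m k R}
    {M : Matrix m n R} (h : LinearMap.range M.mulVecLin ≤ LinearMap.range C.mulVecLin) :
    ∃ X : Matrix k n R, C * X = M := by
  have hcol : ∀ j, ∃ v, C *ᵥ v = M.col j := fun j =>
    h ⟨Pi.single j 1, by simp [mulVec_single]⟩
  choose v hv using hcol
  exact ⟨of fun a j => v j a, by
    ext i j
    simpa [Matrix.mul_apply, mulVec, dotProduct] using congrFun (hv j) i⟩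

theorem rank_eq_card_of_mul_eq_one [CommRing R] [StrongRankCondition R] [Fintype m]
    [DecidableEq k] {C : Matrix m k R} {L : Matrix k m R} (h : L * C = 1) :
    C.rank = Fintype.card k :=
  le_antisymm C.rank_le_card_width (by simpa [h, rank_one] using rank_mul_le_right L C)

variable [Field K]

theorem exists_linearIndependent_cols_of_rank_eq {M : Matrix m n K} {r : ℕ} (h : M.rank = r) :
    ∃ ι : Fin r → n, LinearIndependent K (M.col ∘ ι) := by
  obtain ⟨κ, a, ha, hspan, hli⟩ := exists_linearIndependent' K M.col
  have : Finite κ := .of_injective a ha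
  have := Fintype.ofFinite κ
  have hcard : Fintype.card κ = r := by
    rw [← h, rank_eq_finrank_span_cols, ← hspan, finrank_span_eq_card hli]
  exact ⟨a ∘ (Fintype.equivFinOfCardEq hcard).symm, hli.comp _ (Equiv.injective _)⟩

theorem isUnit_transpose_mul_self_of_linearIndependent_cols [Fintype m] [LinearOrder K]
    [IsStrictOrderedRing K] [DecidableEq n] {A : Matrix m n K} (h : LinearIndependent K A.col) :
    IsUnit (Aᵀ * A) := by
  rw [← mulVec_injective_iff_isUnit, ← coe_mulVecLin, ← LinearMap.ker_eq_bot,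
    ker_mulVecLin_transpose_mul_self, LinearMap.ker_eq_bot, coe_mulVecLin, mulVec_injective_iff]
  exact h

theorem eq_submatrix_mul_mul_of_mul_submatrix_eq_one [Fintype m] [DecidableEq n] [DecidableEq k]
    (M : Matrix m n K) (ι : k → n) {L : Matrix k m K} (hL : L * M.submatrix id ι = 1)
    (hrank : M.rank = Fintype.card k) : M = M.submatrix id ι * (L * M) := by
  set C := M.submatrix id ι
  have hle : LinearMap.range C.mulVecLin ≤ LinearMap.range M.mulVecLin := by
    have hC : M * (1 : Matrix n n K).submatrix id ι = C := by
      simpa using mul_submatrix_one (Equiv.refl n) ι M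
    rw [← hC, mulVecLin_mul]
    exact LinearMap.range_comp_le_range _ _
  have hrange : LinearMap.range C.mulVecLin = LinearMap.range M.mulVecLin :=
    Submodule.eq_of_le_of_finrank_eq hle ((rank_eq_card_of_mul_eq_one hL).trans hrank.symm)
  obtain ⟨X, hX⟩ := exists_mul_eq_of_range_le hrange.ge
  calc M = C * X := hX.symm
    _ = C * (L * C * X) := by rw [hL, Matrix.one_mul]
    _ = C * (L * M) := by rw [Matrix.mul_assoc, hX]

end Matrix

theorem stmt4_general (r s s₁ : ℕ)
    (Ut : Set (Fin r → ℝ)) (hUt : IsOpen Ut)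
    (G : (Fin r → ℝ) → Matrix (Fin s) (Fin s) ℝ)
    (hG : ContDiffOn ℝ (⊤ : ℕ∞) (fun x i j => G x i j) Ut)
    (hrank : ∀ x ∈ Ut, (G x).rank = s₁) :
    ∀ x₀ ∈ Ut, ∃ U₀ : Set (Fin r → ℝ), IsOpen U₀ ∧ x₀ ∈ U₀ ∧ U₀ ⊆ Ut ∧
      ∃ (Gt : (Fin r → ℝ) → Matrix (Fin s) (Fin s₁) ℝ)
        (R : (Fin r → ℝ) → Matrix (Fin s₁) (Fin s) ℝ),
        ContDiffOn ℝ (⊤ : ℕ∞) (fun x i j => Gt x i j) U₀ ∧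
        ContDiffOn ℝ (⊤ : ℕ∞) (fun x i j => R x i j) U₀ ∧
        (∀ x ∈ U₀, (Gt x).rank = s₁ ∧ (R x).rank = s₁ ∧ G x = Gt x * R x) ∧
        ∃ (σ : Equiv.Perm (Fin s)) (e : (Fin (s - s₁) ⊕ Fin s₁) ≃ Fin s)
          (A : (Fin r → ℝ) → Matrix (Fin s₁) (Fin (s - s₁)) ℝ),
          ContDiffOn ℝ (⊤ : ℕ∞) (fun x i j => A x i j) U₀ ∧
          ∀ x ∈ U₀,
            (∀ i k, Gt x i k = G x i (σ (e (Sum.inr k)))) ∧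
            (∀ k j, R x k j =
              Sum.elim (fun l => A x k l) (fun k' => if k = k' then (1 : ℝ) else 0)
                (e.symm (σ⁻¹ j))) := by
  intro x₀ hx₀
  obtain ⟨ι, hι⟩ := exists_linearIndependent_cols_of_rank_eq (hrank x₀ hx₀)
  obtain ⟨e, he⟩ := Fin.exists_sumEquiv_inr_eq hι.injective.of_comp
  set Gt := fun x => (G x).submatrix id ι
  set B := fun x => (Gt x)ᵀ * Gt x
  set L := fun x => (B x)⁻¹ * (Gt x)ᵀ
  set U₀ := Ut ∩ {x | (B x).det ≠ 0}
  have hGt : ContDiffOn ℝ (⊤ : ℕ∞) (fun x i j => Gt x i j) Ut :=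
    contDiffOn_matrix_iff.2 fun i k => contDiffOn_matrix_iff.1 hG i (ι k)
  have hB := hGt.matrix_transpose.matrix_mul_s4 hGt
  have hL : ContDiffOn ℝ (⊤ : ℕ∞) (fun x i j => L x i j) U₀ :=
    ((hB.mono inter_subset_left).matrix_inv_s4 fun _ hx => hx.2).matrix_mul_s4
      (hGt.matrix_transpose.mono inter_subset_left)
  have hR := hL.matrix_mul_s4 (hG.mono inter_subset_left)
  have hLGt : ∀ x ∈ U₀, L x * Gt x = 1 := fun x hx =>
    (Matrix.mul_assoc _ _ _).trans (nonsing_inv_mul _ hx.2.isUnit)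
  have hfactor : ∀ x ∈ U₀, G x = Gt x * (L x * G x) := fun x hx =>
    (G x).eq_submatrix_mul_mul_of_mul_submatrix_eq_one ι (hLGt x hx)
      ((hrank x hx.1).trans (Fintype.card_fin s₁).symm)
  have hBx₀ : (B x₀).det ≠ 0 :=
    ((isUnit_iff_isUnit_det _).1 (isUnit_transpose_mul_self_of_linearIndependent_cols hι)).ne_zero
  refine ⟨U₀, hB.matrix_det_s4.continuousOn.isOpen_inter_preimage hUt isOpen_compl_singleton,
    ⟨hx₀, hBx₀⟩,
    inter_subset_left, Gt, fun x => L x * G x, hGt.mono inter_subset_left, hR,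
    fun x hx => ⟨?_, ?_, hfactor x hx⟩, 1, e, fun x => (L x * G x).submatrix id (e ∘ Sum.inl),
    contDiffOn_matrix_iff.2 fun k l => contDiffOn_matrix_iff.1 hR k (e (Sum.inl l)),
    fun x hx => ⟨fun i k => by simp [Gt, he], fun k j => ?_⟩⟩
  · simpa using rank_eq_card_of_mul_eq_one (hLGt x hx)
  · refine le_antisymm (by simpa using rank_le_card_height (L x * G x)) ?_
    simpa [← hfactor x hx, hrank x hx.1] using rank_mul_le_right (Gt x) (L x * G x)
  · obtain ⟨j, rfl⟩ := e.surjective j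
    rcases j with l | k'
    · simp
    · simpa [Gt, ← he, Matrix.mul_apply, Matrix.one_apply] using
        congrFun (congrFun (hLGt x hx) k) k'

/-- Local smooth rank factorization of a constant-rank matrix-valued map:
if `G : Ut → ℝ^{s×s}` is `C^∞` with `rank G(x) = s₁` on `Ut` (`0 < s₁ < s`), then near every
`x₀ ∈ Ut` there are `C^∞` maps `G̃ : U₀ → ℝ^{s×s₁}` and `R : U₀ → ℝ^{s₁×s}`, each of rank `s₁`
at every point, with `G = G̃·R`; moreover (after a suitable permutation `σ` of the columns
of `G`) one may take `G̃(x)` to consist of `s₁` columns of `G(x)` and `R(x) = (A(x), I_{s₁})`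
for a `C^∞` map `A`. -/
theorem stmt4 (r s s₁ : ℕ) (hs : 2 ≤ s) (hs₁0 : 0 < s₁) (hs₁s : s₁ < s)
    (Ut : Set (Fin r → ℝ)) (hUt : IsOpen Ut)
    (G : (Fin r → ℝ) → Matrix (Fin s) (Fin s) ℝ)
    (hG : ContDiffOn ℝ (⊤ : ℕ∞) (fun x i j => G x i j) Ut)
    (hrank : ∀ x ∈ Ut, (G x).rank = s₁) :
    ∀ x₀ ∈ Ut, ∃ U₀ : Set (Fin r → ℝ), IsOpen U₀ ∧ x₀ ∈ U₀ ∧ U₀ ⊆ Ut ∧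
      ∃ (Gt : (Fin r → ℝ) → Matrix (Fin s) (Fin s₁) ℝ)
        (R : (Fin r → ℝ) → Matrix (Fin s₁) (Fin s) ℝ),
        ContDiffOn ℝ (⊤ : ℕ∞) (fun x i j => Gt x i j) U₀ ∧
        ContDiffOn ℝ (⊤ : ℕ∞) (fun x i j => R x i j) U₀ ∧
        (∀ x ∈ U₀, (Gt x).rank = s₁ ∧ (R x).rank = s₁ ∧ G x = Gt x * R x) ∧
        ∃ (σ : Equiv.Perm (Fin s)) (e : (Fin (s - s₁) ⊕ Fin s₁) ≃ Fin s)
          (A : (Fin r → ℝ) → Matrix (Fin s₁) (Fin (s - s₁)) ℝ),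
          ContDiffOn ℝ (⊤ : ℕ∞) (fun x i j => A x i j) U₀ ∧
          ∀ x ∈ U₀,
            (∀ i k, Gt x i k = G x i (σ (e (Sum.inr k)))) ∧
            (∀ k j, R x k j =
              Sum.elim (fun l => A x k l) (fun k' => if k = k' then (1 : ℝ) else 0)
                (e.symm (σ⁻¹ j))) :=
  stmt4_general r s s₁ Ut hUt G hG hrank
end

section
/- Let Ũ ⊆ ℝ^r be open, 0 < s₁ < s, let G̃₀ : Ũ → ℝ^{s×s₁} and R : Ũ → ℝ^{s₁×s} be C^∞ maps each of rank s₁ at every point, set G₀(x) = G̃₀(x)R(x), let w : Ũ → ℝ^s be C^∞, and set g₁(x) := G₀(x)w(x). Define μ : Ũ×ℝ^s → ℝ^{s₁} by μ(x,y) = R(x)(y + w(x)) and P : Ũ×ℝ^s → ℝ^{(r+s)×s₁} by P(x,y) = (0; G̃₀(x)) (block column). Then: (i) G₀(x)y + g₁(x) = G̃₀(x)·μ(x,y) for all (x,y), so the vector field h⁽⁰⁾(x,y) = (0; G₀(x)y + g₁(x)) satisfies h⁽⁰⁾ = P·μ; (ii) Dμ(x,y)·P(x,y) = R(x)·G̃₀(x)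 for all (x,y); (iii) Dμ has rank s₁ at every point, hence the zero set Ẑ = {(x,y) ∈ Ũ×ℝ^s : R(x)(y + w(x)) = 0} is a C^∞ submanifold of ℝ^{r+s} of dimension r + s − s₁. -/
/-!
Both identities rest on `G₀ = G̃₀ R` and on the fact that the partial derivative of
`μ(x, y) = R(x)(y + w(x))` in `y` is `R(x)`: the `y`-columns of `Dμ` form `R(x)`, and `P` vanishes
on the `x`-rows, so `Dμ · P = R · G̃₀`. With `G̃₀` replaced by the identity this exhibits `R(x)` as
`Dμ · (0; 1)`, whence `s₁ = rank R ≤ rank Dμ ≤ s₁`. For the same reason `Dμ` is surjective, so `Ẑ`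
is a regular level set: completing `μ` by linear coordinates on `ker Dμ(z)` gives a map whose
derivative at `z` is invertible, and the inverse function theorem makes it a straightening chart.
-/

open Set Matrix

/-- `Z` is a `d`-dimensional `C^∞` submanifold (of codimension `k`) of the normed space `E`:
around each of its points there is a `C^∞` diffeomorphism onto an open set of
`ℝ^d × ℝ^k` straightening `Z` to `{(u,w) : w = 0}`. -/
def IsCinftySubmanifold {E : Type*} [NormedAddCommGroup E] [NormedSpace ℝ E]
    (Z : Set E) (d k : ℕ) : Prop :=
  ∀ z ∈ Z, ∃ (Ω : Set E) (φ : E → (Fin d → ℝ) × (Fin k → ℝ))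
      (ψ : (Fin d → ℝ) × (Fin k → ℝ) → E),
    IsOpen Ω ∧ z ∈ Ω ∧ ContDiffOn ℝ (⊤ : ℕ∞) φ Ω ∧ IsOpen (φ '' Ω) ∧
    ContDiffOn ℝ (⊤ : ℕ∞) ψ (φ '' Ω) ∧ (∀ p ∈ Ω, ψ (φ p) = p) ∧
    (∀ q ∈ φ '' Ω, φ (ψ q) = q) ∧ ∀ p ∈ Ω, (p ∈ Z ↔ (φ p).2 = 0)

/-- The Jacobian of `μ : ℝ^r × ℝ^s → ℝ^{s₁}` at `p`, as an `s₁ × (r ⊕ s)` matrix. -/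
noncomputable def jacobianProd (r s s₁ : ℕ)
    (μ : (Fin r → ℝ) × (Fin s → ℝ) → Fin s₁ → ℝ)
    (p : (Fin r → ℝ) × (Fin s → ℝ)) : Matrix (Fin s₁) (Fin r ⊕ Fin s) ℝ :=
  Matrix.of fun k d =>
    fderiv ℝ (fun q => μ q k) p
      (Sum.elim (fun i => (Pi.single i 1, 0)) (fun j => (0, Pi.single j 1)) d)

open Function Module

theorem ContDiffOn.matrix_mulVec_s5 {E : Type*} [NormedAddCommGroup E] [NormedSpace ℝ E]
    {m n : Type*} [Fintype m] [Fintype n] {k : WithTop ℕ∞} {U : Set E}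
    {A : E → Matrix m n ℝ} {v : E → n → ℝ}
    (hA : ContDiffOn ℝ k (fun x i j => A x i j) U) (hv : ContDiffOn ℝ k v U) :
    ContDiffOn ℝ k (fun x => A x *ᵥ v x) U :=
  contDiffOn_pi.2 fun i => ContDiffOn.sum fun j _ =>
    (contDiffOn_pi.1 (contDiffOn_pi.1 hA i) j).mul (contDiffOn_pi.1 hv j)

theorem Matrix.mulVec_surjective_of_rank_eq {m n K : Type*} [Fintype m] [Fintype n] [Field K]
    {A : Matrix m n K} (hA : A.rank = Fintype.card m) : Surjective A.mulVec := by
  have hrange : LinearMap.range A.mulVecLin = ⊤ :=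
    Submodule.eq_top_of_finrank_eq (by rw [← Matrix.rank, hA, finrank_fintype_fun_eq_card])
  exact LinearMap.range_eq_top.1 hrange

theorem fderiv_apply_zero_prodMk {E F G : Type*} [NormedAddCommGroup E] [NormedSpace ℝ E]
    [NormedAddCommGroup F] [NormedSpace ℝ F] [NormedAddCommGroup G] [NormedSpace ℝ G]
    {f : E × F → G} {x : E} {y : F} (hf : DifferentiableAt ℝ f (x, y)) (v : F) :
    fderiv ℝ f (x, y) (0, v) = fderiv ℝ (fun y' => f (x, y')) y v := by
  have hcomp : HasFDerivAt (fun y' => f (x, y')) (fderiv ℝ f (x, y) ∘L .inr ℝ E F) y :=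
    hf.hasFDerivAt.comp y (hasFDerivAt_prodMk_right x y)
  rw [hcomp.fderiv]
  rfl

theorem jacobianProd_apply {r s s₁ : ℕ} {μ : (Fin r → ℝ) × (Fin s → ℝ) → Fin s₁ → ℝ}
    {p : (Fin r → ℝ) × (Fin s → ℝ)} (hμ : DifferentiableAt ℝ μ p) (k : Fin s₁)
    (d : Fin r ⊕ Fin s) :
    jacobianProd r s s₁ μ p k d =
      fderiv ℝ μ p (Sum.elim (fun i => (Pi.single i 1, 0)) (fun j => (0, Pi.single j 1)) d) k := by
  rw [jacobianProd, of_apply,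
    fderiv_pi (φ := fun k q => μ q k) fun k => differentiableAt_pi.1 hμ k]
  rfl

section mulVecAffine

variable {r s s₁ : ℕ} (R : (Fin r → ℝ) → Matrix (Fin s₁) (Fin s) ℝ) (w : (Fin r → ℝ) → Fin s → ℝ)

theorem fderiv_mulVec_add_apply_zero {x : Fin r → ℝ} {y : Fin s → ℝ}
    (hμ : DifferentiableAt ℝ (fun p : (Fin r → ℝ) × (Fin s → ℝ) => R p.1 *ᵥ (p.2 + w p.1)) (x, y))
    (v : Fin s → ℝ) :
    fderiv ℝ (fun p : (Fin r → ℝ) × (Fin s → ℝ) => R p.1 *ᵥ (p.2 + w p.1)) (x, y) (0, v) =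
      R x *ᵥ v := by
  rw [fderiv_apply_zero_prodMk hμ]
  have hpartial : HasFDerivAt (fun y' => R x *ᵥ (y' + w x))
      (LinearMap.toContinuousLinearMap (mulVecLin (R x))) y :=
    (hasFDerivAt_comp_add_right (f := (mulVecLin (R x)).toContinuousLinearMap) (w x)).2
      (ContinuousLinearMap.hasFDerivAt _)
  rw [hpartial.fderiv]
  rfl

theorem toCols₂_jacobianProd_mulVec_add {x : Fin r → ℝ} {y : Fin s → ℝ}
    (hμ : DifferentiableAt ℝ (fun p : (Fin r → ℝ) × (Fin s → ℝ) => R p.1 *ᵥ (p.2 + w p.1)) (x, y)) :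
    toCols₂ (jacobianProd r s s₁ (fun p => R p.1 *ᵥ (p.2 + w p.1)) (x, y)) = R x := by
  ext k j
  rw [toCols₂, of_apply, jacobianProd_apply hμ, Sum.elim_inr,
    fderiv_mulVec_add_apply_zero R w hμ, mulVec_single_one]
  rfl

theorem jacobianProd_mulVec_add_mul_fromRows_zero {n : Type*} [Fintype n]
    {x : Fin r → ℝ} {y : Fin s → ℝ}
    (hμ : DifferentiableAt ℝ (fun p : (Fin r → ℝ) × (Fin s → ℝ) => R p.1 *ᵥ (p.2 + w p.1)) (x, y))
    (G : Matrix (Fin s) n ℝ) :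
    jacobianProd r s s₁ (fun p => R p.1 *ᵥ (p.2 + w p.1)) (x, y) *
      fromRows (0 : Matrix (Fin r) n ℝ) G = R x * G := by
  rw [← fromCols_toCols (jacobianProd _ _ _ _ _), fromCols_mul_fromRows,
    toCols₂_jacobianProd_mulVec_add R w hμ, Matrix.mul_zero, zero_add]

end mulVecAffine

theorem ContinuousLinearMap.exists_equiv_snd_eq_of_surjective {E F : Type*}
    [NormedAddCommGroup E] [NormedSpace ℝ E] [FiniteDimensional ℝ E]
    [NormedAddCommGroup F] [NormedSpace ℝ F]
    (L : E →L[ℝ] F) (hL : Surjective L) {d : ℕ} (hd : finrank ℝ E = d + finrank ℝ F) :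
    ∃ e : E ≃L[ℝ] (Fin d → ℝ) × F, ∀ v, (e v).2 = L v := by
  have hrange : LinearMap.range (L : E →ₗ[ℝ] F) = ⊤ := LinearMap.range_eq_top.2 hL
  have hker : finrank ℝ (LinearMap.ker (L : E →ₗ[ℝ] F)) = d := by
    have := LinearMap.finrank_range_add_finrank_ker (L : E →ₗ[ℝ] F)
    rw [hrange, finrank_top] at this
    omega
  obtain ⟨K, hK⟩ := Submodule.exists_isCompl (LinearMap.ker (L : E →ₗ[ℝ] F))
  let coord := (finBasisOfFinrankEq ℝ _ hker).equivFun.toLinearMap ∘ₗ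
    Submodule.projectionOnto _ K hK
  have hcoord_range : LinearMap.range coord = ⊤ := by
    rw [LinearMap.range_comp_of_range_eq_top _ (Submodule.range_projectionOnto hK),
      LinearEquiv.range]
  have hcoord_ker : LinearMap.ker coord = K := by
    rw [LinearEquiv.ker_comp, Submodule.ker_projectionOnto]
  let e := LinearMap.equivProdOfSurjectiveOfIsCompl coord (L : E →ₗ[ℝ] F) hcoord_range hrange
    (hcoord_ker ▸ hK.symm)
  exact ⟨e.toContinuousLinearEquiv, fun _ => rfl⟩

theorem ContDiffOn.exists_inverse_of_hasFDerivAt_equiv {E F : Type*}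
    [NormedAddCommGroup E] [NormedSpace ℝ E] [CompleteSpace E]
    [NormedAddCommGroup F] [NormedSpace ℝ F]
    {U : Set E} (hU : IsOpen U) {φ : E → F} (hφ : ContDiffOn ℝ (⊤ : ℕ∞) φ U) {z : E} (hz : z ∈ U)
    {L : E ≃L[ℝ] F} (hL : HasFDerivAt φ (L : E →L[ℝ] F) z) :
    ∃ (Ω : Set E) (ψ : F → E), IsOpen Ω ∧ z ∈ Ω ∧ Ω ⊆ U ∧ IsOpen (φ '' Ω) ∧
      ContDiffOn ℝ (⊤ : ℕ∞) ψ (φ '' Ω) ∧ (∀ p ∈ Ω, ψ (φ p) = p) ∧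
      ∀ q ∈ φ '' Ω, φ (ψ q) = q := by
  let Φ := (hφ.contDiffAt (hU.mem_nhds hz)).toOpenPartialHomeomorph φ hL (by simp)
  -- `Φ.symm` is smooth only where `fderiv φ` is invertible, so we shrink `Φ.source` to that set.
  let S := U ∩ fderiv ℝ φ ⁻¹' range ((↑) : (E ≃L[ℝ] F) → E →L[ℝ] F)
  have hS : IsOpen S := (hφ.continuousOn_fderiv_of_isOpen hU (by simp)).isOpen_inter_preimage hU
    ContinuousLinearEquiv.isOpen
  have hΦS : Φ.source ∩ S ⊆ Φ.source := inter_subset_left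
  have himage : φ '' (Φ.source ∩ S) = Φ.target ∩ Φ.symm ⁻¹' (Φ.source ∩ S) :=
    Φ.image_eq_target_inter_inv_preimage hΦS
  refine ⟨Φ.source ∩ S, Φ.symm, Φ.open_source.inter hS,
    ⟨ContDiffAt.mem_toOpenPartialHomeomorph_source _ hL _, hz, L, hL.fderiv.symm⟩,
    fun p hp => hp.2.1, ?_, ?_, fun p hp => Φ.left_inv hp.1, ?_⟩
  · rw [himage]
    exact Φ.continuousOn_symm.isOpen_inter_preimage Φ.open_target (Φ.open_source.inter hS)
  · rintro _ ⟨p, ⟨hpΦ, hpU, Lp, hLp⟩, rfl⟩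
    have hφp : HasFDerivAt φ (Lp : E →L[ℝ] F) p := by
      rw [hLp]
      exact ((hφ.differentiableOn (by simp) p hpU).differentiableAt (hU.mem_nhds hpU)).hasFDerivAt
    refine (Φ.contDiffAt_symm (f₀' := Lp) (Φ.map_source hpΦ) ?_ ?_).contDiffWithinAt
    · rwa [Φ.left_inv hpΦ]
    · rw [Φ.left_inv hpΦ]
      exact hφ.contDiffAt (hU.mem_nhds hpU)
  · rintro _ ⟨p, hp, rfl⟩
    change φ (Φ.symm (Φ p)) = φ p
    rw [Φ.left_inv hp.1]

theorem isCinftySubmanifold_of_surjective_fderiv {E : Type*}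
    [NormedAddCommGroup E] [NormedSpace ℝ E] [FiniteDimensional ℝ E] {k : ℕ}
    {U : Set E} (hU : IsOpen U) {f : E → Fin k → ℝ} (hf : ContDiffOn ℝ (⊤ : ℕ∞) f U)
    (hsurj : ∀ z ∈ U, f z = 0 → Surjective (fderiv ℝ f z)) :
    IsCinftySubmanifold {p | p ∈ U ∧ f p = 0} (finrank ℝ E - k) k := by
  rintro z ⟨hzU, hfz⟩
  have hk : k ≤ finrank ℝ E := by
    simpa using LinearMap.finrank_le_finrank_of_surjective (hsurj z hzU hfz)
  obtain ⟨e, he⟩ := (fderiv ℝ f z).exists_equiv_snd_eq_of_surjective (hsurj z hzU hfz)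
    (d := finrank ℝ E - k) (by simp; omega)
  let φ : E → (Fin (finrank ℝ E - k) → ℝ) × (Fin k → ℝ) := fun p => ((e p).1, f p)
  have hφ : ContDiffOn ℝ (⊤ : ℕ∞) φ U :=
    (contDiff_fst.comp e.contDiff).contDiffOn.prodMk hf
  have hφz : HasFDerivAt φ (e : E →L[ℝ] _) z := by
    have hfz' := ((hf.differentiableOn (by simp) z hzU).differentiableAt (hU.mem_nhds hzU))
    convert e.hasFDerivAt.fst.prodMk hfz'.hasFDerivAt
    ext1 v
    exact Prod.ext rfl (he v)
  obtain ⟨Ω, ψ, hΩ, hzΩ, hΩU, hφΩ, hψ, hψφ, hφψ⟩ :=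
    hφ.exists_inverse_of_hasFDerivAt_equiv hU hzU hφz
  exact ⟨Ω, φ, ψ, hΩ, hzΩ, hφ.mono hΩU, hφΩ, hψ, hψφ, hφψ,
    fun p hp => and_iff_right (hΩU hp)⟩

theorem stmt5_general (r s s₁ : ℕ)
    (Ut : Set (Fin r → ℝ)) (hUt : IsOpen Ut)
    (Gt : (Fin r → ℝ) → Matrix (Fin s) (Fin s₁) ℝ)
    (R : (Fin r → ℝ) → Matrix (Fin s₁) (Fin s) ℝ)
    (w : (Fin r → ℝ) → Fin s → ℝ)
    (hR : ContDiffOn ℝ (⊤ : ℕ∞) (fun x i j => R x i j) Ut)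
    (hw : ContDiffOn ℝ (⊤ : ℕ∞) w Ut)
    (hrkR : ∀ x ∈ Ut, (R x).rank = s₁) :
    let G₀ : (Fin r → ℝ) → Matrix (Fin s) (Fin s) ℝ := fun x => Gt x * R x
    let g₁ : (Fin r → ℝ) → Fin s → ℝ := fun x => (G₀ x).mulVec (w x)
    let μ : (Fin r → ℝ) × (Fin s → ℝ) → Fin s₁ → ℝ :=
      fun p => (R p.1).mulVec (p.2 + w p.1)
    let P : (Fin r → ℝ) × (Fin s → ℝ) → Matrix (Fin r ⊕ Fin s) (Fin s₁) ℝ :=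
      fun p => Matrix.fromRows 0 (Gt p.1)
    (∀ x ∈ Ut, ∀ y : Fin s → ℝ,
      (G₀ x).mulVec y + g₁ x = (Gt x).mulVec (μ (x, y)) ∧
      (Sum.elim (0 : Fin r → ℝ) ((G₀ x).mulVec y + g₁ x) =
        (P (x, y)).mulVec (μ (x, y)))) ∧
    (∀ x ∈ Ut, ∀ y : Fin s → ℝ,
      jacobianProd r s s₁ μ (x, y) * P (x, y) = R x * Gt x) ∧
    (∀ x ∈ Ut, ∀ y : Fin s → ℝ, (jacobianProd r s s₁ μ (x, y)).rank = s₁) ∧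
    IsCinftySubmanifold
      {p : (Fin r → ℝ) × (Fin s → ℝ) | p.1 ∈ Ut ∧ (R p.1).mulVec (p.2 + w p.1) = 0}
      (r + s - s₁) s₁ := by
  intro G₀ g₁ μ P
  have hfst : MapsTo Prod.fst (Ut ×ˢ univ : Set ((Fin r → ℝ) × (Fin s → ℝ))) Ut :=
    fun _ hp => hp.1
  have hμ : ContDiffOn ℝ (⊤ : ℕ∞) μ (Ut ×ˢ univ) :=
    (hR.comp contDiff_fst.contDiffOn hfst).matrix_mulVec_s5
      (contDiff_snd.contDiffOn.add (hw.comp contDiff_fst.contDiffOn hfst))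
  have hμdiff : ∀ x ∈ Ut, ∀ y, DifferentiableAt ℝ μ (x, y) := fun x hx y =>
    (hμ.contDiffAt ((hUt.prod isOpen_univ).mem_nhds ⟨hx, trivial⟩)).differentiableAt (by simp)
  have hfactor : ∀ x y, G₀ x *ᵥ y + g₁ x = Gt x *ᵥ μ (x, y) := fun x y => by
    simp only [G₀, g₁, μ, ← mulVec_mulVec, mulVec_add]
  refine ⟨fun x _ y => ⟨hfactor x y, ?_⟩,
    fun x hx y => jacobianProd_mulVec_add_mul_fromRows_zero R w (hμdiff x hx y) (Gt x),
    fun x hx y => ?_, ?_⟩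
  · rw [fromRows_mulVec, zero_mulVec, hfactor]
  · have hJ := jacobianProd_mulVec_add_mul_fromRows_zero R w (hμdiff x hx y)
      (1 : Matrix (Fin s) (Fin s) ℝ)
    rw [Matrix.mul_one] at hJ
    refine le_antisymm ((rank_le_card_height _).trans_eq (Fintype.card_fin _)) ?_
    calc s₁ = (R x).rank := (hrkR x hx).symm
      _ ≤ _ := hJ ▸ rank_mul_le_left _ _
  · have hsurj : ∀ z ∈ Ut ×ˢ univ, μ z = 0 → Surjective (fderiv ℝ μ z) := by
      rintro ⟨x, y⟩ ⟨hx, -⟩ -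
      intro v
      obtain ⟨u, rfl⟩ :=
        mulVec_surjective_of_rank_eq ((hrkR x hx).trans (Fintype.card_fin _).symm) v
      exact ⟨(0, u), fderiv_mulVec_add_apply_zero R w (hμdiff x hx y) u⟩
    simpa [finrank_prod] using
      isCinftySubmanifold_of_surjective_fderiv (hUt.prod isOpen_univ) hμ hsurj

/-- Product decomposition for the nonstandard reduction: with
`G₀ = G̃₀R`, `g₁ = G₀w`, `μ(x,y) = R(x)(y+w(x))` and `P = (0; G̃₀)`, one has
(i) `G₀(x)y + g₁(x) = G̃₀(x)μ(x,y)`, i.e. `h⁽⁰⁾ = P·μ`; (ii) `Dμ·P = R·G̃₀`;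
(iii) `Dμ` has rank `s₁` everywhere, hence `Ẑ = {(x,y) : x ∈ Ũ, R(x)(y+w(x)) = 0}` is a
`C^∞` submanifold of dimension `r + s − s₁`. -/
theorem stmt5 (r s s₁ : ℕ) (hs₁0 : 0 < s₁) (hs₁s : s₁ < s)
    (Ut : Set (Fin r → ℝ)) (hUt : IsOpen Ut)
    (Gt : (Fin r → ℝ) → Matrix (Fin s) (Fin s₁) ℝ)
    (R : (Fin r → ℝ) → Matrix (Fin s₁) (Fin s) ℝ)
    (w : (Fin r → ℝ) → Fin s → ℝ)
    (hGt : ContDiffOn ℝ (⊤ : ℕ∞) (fun x i j => Gt x i j) Ut)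
    (hR : ContDiffOn ℝ (⊤ : ℕ∞) (fun x i j => R x i j) Ut)
    (hw : ContDiffOn ℝ (⊤ : ℕ∞) w Ut)
    (hrkGt : ∀ x ∈ Ut, (Gt x).rank = s₁)
    (hrkR : ∀ x ∈ Ut, (R x).rank = s₁) :
    let G₀ : (Fin r → ℝ) → Matrix (Fin s) (Fin s) ℝ := fun x => Gt x * R x
    let g₁ : (Fin r → ℝ) → Fin s → ℝ := fun x => (G₀ x).mulVec (w x)
    let μ : (Fin r → ℝ) × (Fin s → ℝ) → Fin s₁ → ℝ :=
      fun p => (R p.1).mulVec (p.2 + w p.1)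
    let P : (Fin r → ℝ) × (Fin s → ℝ) → Matrix (Fin r ⊕ Fin s) (Fin s₁) ℝ :=
      fun p => Matrix.fromRows 0 (Gt p.1)
    (∀ x ∈ Ut, ∀ y : Fin s → ℝ,
      (G₀ x).mulVec y + g₁ x = (Gt x).mulVec (μ (x, y)) ∧
      (Sum.elim (0 : Fin r → ℝ) ((G₀ x).mulVec y + g₁ x) =
        (P (x, y)).mulVec (μ (x, y)))) ∧
    (∀ x ∈ Ut, ∀ y : Fin s → ℝ,
      jacobianProd r s s₁ μ (x, y) * P (x, y) = R x * Gt x) ∧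
    (∀ x ∈ Ut, ∀ y : Fin s → ℝ, (jacobianProd r s s₁ μ (x, y)).rank = s₁) ∧
    IsCinftySubmanifold
      {p : (Fin r → ℝ) × (Fin s → ℝ) | p.1 ∈ Ut ∧ (R p.1).mulVec (p.2 + w p.1) = 0}
      (r + s - s₁) s₁ :=
  stmt5_general r s s₁ Ut hUt Gt R w hR hw hrkR
end

section
/- Let U ⊆ ℝ^n be open and let P : U → ℝ^{n×r}, μ : U → ℝ^r and h₁ : U → ℝ^n be C^∞ with Dμ(z)P(z) invertible for every z ∈ U. Define Ψ₀(z) = (Dμ(z)P(z))^{-1}Dμ(z)h₁(z), Λ₀(z) = Dμ(z)P(z) and Λ₁(z) = DΨ₀(z)P(z). Then for every z ∈ U and every ε ∈ ℝ, with h(z,ε) = P(z)μ(z) + εh₁(z), the exact identity D(μ + εΨ₀)(z)·h(z,ε) − (Λ₀(z) + εΛ₁(z))·(μ(z) + εΨ₀(z)) = ε²(DΨ₀(z)h₁(z) − Λ₁(z)Ψ₀(z)) holds; that is, the invariance condition for the set {z : μ(z) + εΨ₀(z) = 0} is satisfied up to terms of order ε². Moreover, for any C^∞ matrix-valued map A :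 U → ℝ^{r×r}, (I_r + εA(z))·(μ(z) + εΨ₀(z)) = μ(z) + ε(Ψ₀(z) + A(z)μ(z)) + ε²A(z)Ψ₀(z), so the equations μ + ε(Ψ₀ + Aμ) = 0 and μ + εΨ₀ = 0 define the same set up to terms of order ε². -/
/-!
Since `μ` and `Ψ₀` are differentiable, `D(μ + εΨ₀) = Dμ + ε DΨ₀`, so the invariance defect is a
polynomial of degree two in `ε`. Its constant term `DμPμ − Λ₀μ` vanishes identically, and its
linear term `Dμh₁ + DΨ₀Pμ − Λ₁μ − Λ₀Ψ₀` vanishes because `Ψ₀` is defined by `Λ₀Ψ₀ = Dμh₁`.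
The gauge identity is plain matrix algebra.
-/

open Set Matrix

/-- The Jacobian matrix of `μ : ℝ^n → ℝ^r` at `z` (entries `∂μ_k/∂z_j`). -/
noncomputable def jacobianMat (n r : ℕ) (μ : (Fin n → ℝ) → Fin r → ℝ)
    (z : Fin n → ℝ) : Matrix (Fin r) (Fin n) ℝ :=
  Matrix.of fun k j => fderiv ℝ (fun w => μ w k) z (Pi.single j 1)

section Algebra

variable {R : Type*} [CommRing R] {m n : Type*} [Fintype m] [Fintype n]

theorem invariance_defect_eq_sq_smul (Jμ JΨ : Matrix m n R) (P : Matrix n m R)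
    (μ Ψ : m → R) (h₁ : n → R) (ε : R) (hΨ : (Jμ * P) *ᵥ Ψ = Jμ *ᵥ h₁) :
    (Jμ + ε • JΨ) *ᵥ (P *ᵥ μ + ε • h₁) - (Jμ * P + ε • (JΨ * P)) *ᵥ (μ + ε • Ψ) =
      ε ^ 2 • (JΨ *ᵥ h₁ - (JΨ * P) *ᵥ Ψ) := by
  simp only [add_mulVec, mulVec_add, mulVec_smul, smul_mulVec, ← mulVec_mulVec, ← hΨ,
    smul_add, smul_sub, smul_smul]
  module

theorem one_add_smul_mulVec_add_smul [DecidableEq m] (A : Matrix m m R) (μ Ψ : m → R) (ε : R) :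
    (1 + ε • A) *ᵥ (μ + ε • Ψ) = μ + ε • (Ψ + A *ᵥ μ) + ε ^ 2 • A *ᵥ Ψ := by
  simp only [add_mulVec, one_mulVec, mulVec_add, mulVec_smul, smul_mulVec, smul_add, smul_smul]
  module

end Algebra

section EntrywiseDifferentiability

variable {X : Type*} [NormedAddCommGroup X] [NormedSpace ℝ X] {z : X} {l m n : Type*}

theorem differentiableAt_mul_apply [Fintype m] {M : X → Matrix l m ℝ} {N : X → Matrix m n ℝ}
    (hM : ∀ i j, DifferentiableAt ℝ (fun w => M w i j) z)
    (hN : ∀ i j, DifferentiableAt ℝ (fun w => N w i j) z) (i : l) (j : n) :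
    DifferentiableAt ℝ (fun w => (M w * N w) i j) z := by
  simp only [mul_apply]
  exact DifferentiableAt.fun_sum fun k _ => (hM i k).mul (hN k j)

theorem differentiableAt_mulVec [Fintype n] {M : X → Matrix m n ℝ} {v : X → n → ℝ}
    (hM : ∀ i j, DifferentiableAt ℝ (fun w => M w i j) z) (hv : DifferentiableAt ℝ v z) :
    DifferentiableAt ℝ (fun w => M w *ᵥ v w) z := by
  refine differentiableAt_pi.2 fun i => ?_
  simp only [mulVec, dotProduct]
  exact DifferentiableAt.fun_sum fun j _ => (hM i j).mul (differentiableAt_pi.1 hv j)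

variable [Fintype m] [DecidableEq m]

theorem differentiableAt_det {M : X → Matrix m m ℝ}
    (hM : ∀ i j, DifferentiableAt ℝ (fun w => M w i j) z) :
    DifferentiableAt ℝ (fun w => (M w).det) z := by
  simp only [det_apply']
  exact DifferentiableAt.fun_sum fun σ _ =>
    (HasFDerivAt.finsetProd fun i _ => (hM (σ i) i).hasFDerivAt).differentiableAt.const_mul _

theorem differentiableAt_adjugate_apply {M : X → Matrix m m ℝ}
    (hM : ∀ i j, DifferentiableAt ℝ (fun w => M w i j) z) (i j : m) :
    DifferentiableAt ℝ (fun w => (M w).adjugate i j) z := by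
  simp only [adjugate_apply]
  refine differentiableAt_det fun a b => ?_
  simp only [updateRow_apply]
  split_ifs
  · exact differentiableAt_const _
  · exact hM a b

/-- Cramer's rule: `M⁻¹ = (det M)⁻¹ • adj M`, a rational function of the entries. -/
theorem differentiableAt_inv_apply {M : X → Matrix m m ℝ}
    (hM : ∀ i j, DifferentiableAt ℝ (fun w => M w i j) z) (hMz : IsUnit (M z)) (i j : m) :
    DifferentiableAt ℝ (fun w => (M w)⁻¹ i j) z := by
  simp only [inv_def, Ring.inverse_eq_inv, Matrix.smul_apply, smul_eq_mul]
  exact ((differentiableAt_det hM).inv ((isUnit_iff_isUnit_det _).1 hMz).ne_zero).mul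
    (differentiableAt_adjugate_apply hM i j)

end EntrywiseDifferentiability

section Jacobian

variable {n r : ℕ} {z : Fin n → ℝ}

theorem jacobianMat_add_smul {μ Ψ : (Fin n → ℝ) → Fin r → ℝ} (hμ : DifferentiableAt ℝ μ z)
    (hΨ : DifferentiableAt ℝ Ψ z) (ε : ℝ) :
    jacobianMat n r (fun w => μ w + ε • Ψ w) z = jacobianMat n r μ z + ε • jacobianMat n r Ψ z := by
  ext k j
  have hΨk := differentiableAt_pi.1 hΨ k
  simp only [jacobianMat, of_apply, Matrix.add_apply, Matrix.smul_apply, Pi.add_apply,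
    Pi.smul_apply, smul_eq_mul, fderiv_fun_add (differentiableAt_pi.1 hμ k) (hΨk.const_mul ε),
    fderiv_const_mul hΨk ε, _root_.add_apply, _root_.smul_apply]

theorem ContDiffOn.differentiableAt_jacobianMat_apply {U : Set (Fin n → ℝ)} (hU : IsOpen U)
    {μ : (Fin n → ℝ) → Fin r → ℝ} (hμ : ContDiffOn ℝ 2 μ U) (hz : z ∈ U) (k : Fin r) (j : Fin n) :
    DifferentiableAt ℝ (fun w => jacobianMat n r μ w k j) z := by
  have hμk : ContDiffOn ℝ 2 (fun w => μ w k) U := contDiffOn_pi.1 hμ k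
  have hDμk := (hμk.fderiv_of_isOpen hU (by norm_num : (1 : WithTop ℕ∞) + 1 ≤ 2)).differentiableOn
    one_ne_zero
  exact ((hDμk z hz).differentiableAt (hU.mem_nhds hz)).clm_apply (differentiableAt_const _)

end Jacobian

/-- First-order approximation of the slow manifold: with
`Ψ₀ = (DμP)⁻¹Dμh₁`, `Λ₀ = DμP`, `Λ₁ = DΨ₀P` and `h(z,ε) = P(z)μ(z) + εh₁(z)`, the exact
identity `D(μ+εΨ₀)·h − (Λ₀+εΛ₁)(μ+εΨ₀) = ε²(DΨ₀h₁ − Λ₁Ψ₀)` holds on `U`, so the invariance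
condition for `{μ + εΨ₀ = 0}` is satisfied up to order `ε²`; moreover for any smooth `A`,
`(I + εA)(μ + εΨ₀) = μ + ε(Ψ₀ + Aμ) + ε²AΨ₀`, exhibiting the gauge freedom. -/
theorem stmt10 (n r : ℕ) (U : Set (Fin n → ℝ)) (hU : IsOpen U)
    (P : (Fin n → ℝ) → Matrix (Fin n) (Fin r) ℝ)
    (μ : (Fin n → ℝ) → Fin r → ℝ) (h₁ : (Fin n → ℝ) → Fin n → ℝ)
    (hP : ContDiffOn ℝ (⊤ : ℕ∞) (fun z i j => P z i j) U)
    (hμ : ContDiffOn ℝ (⊤ : ℕ∞) μ U)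
    (hh₁ : ContDiffOn ℝ (⊤ : ℕ∞) h₁ U)
    (hinv : ∀ z ∈ U, IsUnit (jacobianMat n r μ z * P z)) :
    let Ψ₀ : (Fin n → ℝ) → Fin r → ℝ := fun z =>
      ((jacobianMat n r μ z * P z)⁻¹).mulVec ((jacobianMat n r μ z).mulVec (h₁ z))
    let Λ₀ : (Fin n → ℝ) → Matrix (Fin r) (Fin r) ℝ := fun z => jacobianMat n r μ z * P z
    let Λ₁ : (Fin n → ℝ) → Matrix (Fin r) (Fin r) ℝ := fun z => jacobianMat n r Ψ₀ z * P z
    let h : (Fin n → ℝ) → ℝ → Fin n → ℝ := fun z ε => (P z).mulVec (μ z) + ε • h₁ z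
    (∀ z ∈ U, ∀ ε : ℝ,
      (jacobianMat n r (fun w => μ w + ε • Ψ₀ w) z).mulVec (h z ε) -
          (Λ₀ z + ε • Λ₁ z).mulVec (μ z + ε • Ψ₀ z) =
        ε ^ 2 • ((jacobianMat n r Ψ₀ z).mulVec (h₁ z) - (Λ₁ z).mulVec (Ψ₀ z))) ∧
    ∀ A : (Fin n → ℝ) → Matrix (Fin r) (Fin r) ℝ,
      ContDiffOn ℝ (⊤ : ℕ∞) (fun z i j => A z i j) U →
      ∀ z ∈ U, ∀ ε : ℝ,
        ((1 : Matrix (Fin r) (Fin r) ℝ) + ε • A z).mulVec (μ z + ε • Ψ₀ z) =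
          μ z + ε • (Ψ₀ z + (A z).mulVec (μ z)) + ε ^ 2 • (A z).mulVec (Ψ₀ z) := by
  intro Ψ₀ Λ₀ Λ₁ h
  refine ⟨fun z hz ε => ?_, fun A _ z _ ε => one_add_smul_mulVec_add_smul (A z) (μ z) (Ψ₀ z) ε⟩
  have hzU := hU.mem_nhds hz
  have hDμ := (hμ.of_le (WithTop.coe_le_coe.2 le_top)).differentiableAt_jacobianMat_apply hU hz
  have hPz : ∀ i j, DifferentiableAt ℝ (fun w => P w i j) z := fun i j =>
    differentiableAt_pi.1 (differentiableAt_pi.1 ((hP.contDiffAt hzU).differentiableAt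
      (by simp)) i) j
  have hΨ₀ : DifferentiableAt ℝ Ψ₀ z :=
    differentiableAt_mulVec (differentiableAt_inv_apply (differentiableAt_mul_apply hDμ hPz)
      (hinv z hz)) (differentiableAt_mulVec hDμ ((hh₁.contDiffAt hzU).differentiableAt (by simp)))
  have hΛ₀Ψ₀ : Λ₀ z *ᵥ Ψ₀ z = jacobianMat n r μ z *ᵥ h₁ z := by
    rw [mulVec_mulVec, mul_nonsing_inv _ ((isUnit_iff_isUnit_det _).1 (hinv z hz)), one_mulVec]
  rw [jacobianMat_add_smul ((hμ.contDiffAt hzU).differentiableAt (by simp)) hΨ₀]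
  exact invariance_defect_eq_sq_smul _ _ _ _ _ _ ε hΛ₀Ψ₀
end

section
/- Let n ∈ ℕ, T₂ > 0, ε₀ > 0 and z₀ ∈ ℝ^n. For each ε ∈ (0,ε₀) let z(·,ε) : [0,T₂] → ℝ^n be a function with z(0,ε) = z₀, and let z̄ : [0,T₂] → ℝ^n be such that z(τ,ε) → z̄(τ) as ε → 0⁺ for every τ ∈ (0,T₂]. Let φ : ℝ^n × [0,ε₀) → ℝ satisfy φ(z,ε) = εφ*(z) + ε²ρ(z,ε) for all (z,ε), where φ* : ℝ^n → ℝ and ρ : ℝ^n × [0,ε₀) → ℝ are continuous, and assume that for each ε ∈ (0,ε₀) the function τ ↦ φ(z(τ,ε),ε) is constant on [0,T₂]. Then φ*(z̄(τ)) = φ*(z₀) for all τ ∈ (0,T₂]; i.e., φ* is constant along z̄. -/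
open Set Filter Topology

/-- A first integral of the perturbed system of the form
`φ(z,ε) = ε φ*(z) + ε² ρ(z,ε)` induces, after division by `ε`, the first integral `φ*` of the
reduced system: `φ*(z̄(τ)) = φ*(z₀)` for all `τ ∈ (0,T₂]`. -/
theorem stmt12 (n : ℕ) (T₂ ε₀ : ℝ) (hT : 0 < T₂) (hε : 0 < ε₀)
    (z₀ : Fin n → ℝ) (sol : ℝ → ℝ → Fin n → ℝ) (zbar : ℝ → Fin n → ℝ)
    (hinit : ∀ ε ∈ Set.Ioo 0 ε₀, sol ε 0 = z₀)
    (hconv : ∀ τ ∈ Set.Ioc 0 T₂,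
      Tendsto (fun ε => sol ε τ) (𝓝[>] (0 : ℝ)) (𝓝 (zbar τ)))
    (φ : (Fin n → ℝ) × ℝ → ℝ) (φs : (Fin n → ℝ) → ℝ) (ρ : (Fin n → ℝ) × ℝ → ℝ)
    (hφs : Continuous φs)
    (hρ : ContinuousOn ρ (Set.univ ×ˢ Set.Ico 0 ε₀))
    (hdecomp : ∀ z : Fin n → ℝ, ∀ ε : ℝ, φ (z, ε) = ε * φs z + ε ^ 2 * ρ (z, ε))
    (hfi : ∀ ε ∈ Set.Ioo 0 ε₀, ∀ τ ∈ Set.Icc 0 T₂, φ (sol ε τ, ε) = φ (z₀, ε)) :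
    ∀ τ ∈ Set.Ioc 0 T₂, φs (zbar τ) = φs z₀ := by
  intro τ hτ
  have hmem : ∀ᶠ ε in 𝓝[>] (0:ℝ), ε ∈ Set.Ioo 0 ε₀ :=
    Ioo_mem_nhdsGT_of_mem (by constructor <;> simp [le_refl, hε])
  -- ρ along the solution tends to ρ(zbar τ, 0)
  have hρ1 : Tendsto (fun ε => ρ (sol ε τ, ε)) (𝓝[>] (0:ℝ)) (𝓝 (ρ (zbar τ, 0))) := by
    have hcw : ContinuousWithinAt ρ (Set.univ ×ˢ Set.Ico 0 ε₀) (zbar τ, 0) :=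
      hρ _ (by simp [hε.le, hε])
    apply hcw.tendsto.comp
    rw [tendsto_nhdsWithin_iff]
    refine ⟨((hconv τ hτ).prodMk_nhds (tendsto_nhdsWithin_of_tendsto_nhds tendsto_id)), ?_⟩
    filter_upwards [hmem] with ε hεm
    exact ⟨Set.mem_univ _, hεm.1.le, hεm.2⟩
  have hρ2 : Tendsto (fun ε => ρ (z₀, ε)) (𝓝[>] (0:ℝ)) (𝓝 (ρ (z₀, 0))) := by
    have hcw : ContinuousWithinAt ρ (Set.univ ×ˢ Set.Ico 0 ε₀) (z₀, 0) :=
      hρ _ (by simp [hε.le, hε])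
    apply hcw.tendsto.comp
    rw [tendsto_nhdsWithin_iff]
    refine ⟨(tendsto_const_nhds.prodMk_nhds (tendsto_nhdsWithin_of_tendsto_nhds tendsto_id)), ?_⟩
    filter_upwards [hmem] with ε hεm
    exact ⟨Set.mem_univ _, hεm.1.le, hεm.2⟩
  have hε0 : Tendsto (fun ε : ℝ => ε) (𝓝[>] (0:ℝ)) (𝓝 0) :=
    tendsto_id.mono_left nhdsWithin_le_nhds
  -- limits of the two sides after dividing by ε
  have h1 : Tendsto (fun ε => φs (sol ε τ) + ε * ρ (sol ε τ, ε)) (𝓝[>] (0:ℝ))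
      (𝓝 (φs (zbar τ) + 0 * ρ (zbar τ, 0))) :=
    ((hφs.tendsto _).comp (hconv τ hτ)).add (hε0.mul hρ1)
  have h2 : Tendsto (fun ε => φs z₀ + ε * ρ (z₀, ε)) (𝓝[>] (0:ℝ))
      (𝓝 (φs z₀ + 0 * ρ (z₀, 0))) :=
    tendsto_const_nhds.add (hε0.mul hρ2)
  have heq : (fun ε => φs (sol ε τ) + ε * ρ (sol ε τ, ε)) =ᶠ[𝓝[>] (0:ℝ)]
      (fun ε => φs z₀ + ε * ρ (z₀, ε)) := by
    filter_upwards [hmem] with ε hεm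
    have h := hfi ε hεm τ ⟨hτ.1.le, hτ.2⟩
    rw [hdecomp, hdecomp] at h
    have hne : ε ≠ 0 := ne_of_gt hεm.1
    have : ε * (φs (sol ε τ) + ε * ρ (sol ε τ, ε)) = ε * (φs z₀ + ε * ρ (z₀, ε)) := by
      ring_nf
      ring_nf at h
      linarith
    exact mul_left_cancel₀ hne this
  have := tendsto_nhds_unique (h1.congr' heq) h2
  simpa using this
end

section
/- Let a ≤ 0, c < 0 and b, x₀, y₀ ∈ ℝ. For ε > 0 small let x_ε(τ) = (b y₀/(c − εa))(e^{cτ/ε} − e^{aτ}) + x₀e^{aτ} (the first component of the solution of the scaled system x' = ax + by*, (y*)' = ε^{-1}cy*, x(0) = x₀, y*(0) = y₀/ε), and let x_red(τ) = x₀e^{aτ} (the solution of the formally reduced equation x' = ax, x(0) = x₀). Then for every τ > 0, x_ε(τ) − x_red(τ) → −(b y₀/c)e^{aτ} as ε → 0⁺. In particular, if b y₀ ≠ 0, then x_ε does not converge to x_red pointwise (and hence not uniformly) on any interval [T₁,T₂] with 0 < T₁ < T₂. -/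
open Filter Topology

lemma stmt15_aux (a b c x₀ y₀ : ℝ) (hc : c < 0) (τ : ℝ) (hτ : 0 < τ) :
    Tendsto (fun ε =>
      ((b * y₀ / (c - ε * a)) * (Real.exp (c * τ / ε) - Real.exp (a * τ)) +
        x₀ * Real.exp (a * τ)) - x₀ * Real.exp (a * τ)) (𝓝[>] (0 : ℝ))
      (𝓝 (-(b * y₀ / c) * Real.exp (a * τ))) := by
  have h1 : Tendsto (fun ε : ℝ => c * τ / ε) (𝓝[>] (0 : ℝ)) atBot := by
    have hinv : Tendsto (fun ε : ℝ => ε⁻¹) (𝓝[>] (0 : ℝ)) atTop :=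
      tendsto_inv_nhdsGT_zero
    have hneg : c * τ < 0 := mul_neg_of_neg_of_pos hc hτ
    have := hinv.const_mul_atTop_of_neg hneg
    simpa [div_eq_mul_inv] using this
  have h2 : Tendsto (fun ε : ℝ => Real.exp (c * τ / ε)) (𝓝[>] (0 : ℝ)) (𝓝 0) :=
    Real.tendsto_exp_atBot.comp h1
  have h3 : Tendsto (fun ε : ℝ => c - ε * a) (𝓝[>] (0 : ℝ)) (𝓝 c) := by
    have : Tendsto (fun ε : ℝ => c - ε * a) (𝓝 (0 : ℝ)) (𝓝 (c - 0 * a)) := by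
      exact (continuous_const.sub (continuous_id.mul continuous_const)).tendsto 0
    simpa using this.mono_left nhdsWithin_le_nhds
  have h4 : Tendsto (fun ε : ℝ => b * y₀ / (c - ε * a)) (𝓝[>] (0 : ℝ))
      (𝓝 (b * y₀ / c)) := tendsto_const_nhds.div h3 hc.ne
  have h5 : Tendsto (fun ε : ℝ =>
      (b * y₀ / (c - ε * a)) * (Real.exp (c * τ / ε) - Real.exp (a * τ)))
      (𝓝[>] (0 : ℝ)) (𝓝 ((b * y₀ / c) * (0 - Real.exp (a * τ)))) :=
    h4.mul (h2.sub tendsto_const_nhds)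
  have heq : (b * y₀ / c) * (0 - Real.exp (a * τ)) =
      -(b * y₀ / c) * Real.exp (a * τ) := by ring
  rw [heq] at h5
  convert h5 using 2 with ε
  ring

/-- For `a ≤ 0`, `c < 0`, the first component `x_ε` of the solution of the
scaled system (with non-consistent initial value `y*(0) = y₀/ε`) satisfies
`x_ε(τ) − x_red(τ) → −(b y₀/c) e^{aτ}` as `ε → 0⁺` for each `τ > 0`; in particular if
`b y₀ ≠ 0` then `x_ε` does not converge to `x_red` pointwise (hence not uniformly) on any
interval `[T₁,T₂]` with `0 < T₁ < T₂`. -/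
theorem stmt15 (a b c x₀ y₀ : ℝ) (ha : a ≤ 0) (hc : c < 0) :
    let xe : ℝ → ℝ → ℝ := fun ε τ =>
      (b * y₀ / (c - ε * a)) * (Real.exp (c * τ / ε) - Real.exp (a * τ)) +
        x₀ * Real.exp (a * τ)
    let xred : ℝ → ℝ := fun τ => x₀ * Real.exp (a * τ)
    (∀ τ : ℝ, 0 < τ →
      Tendsto (fun ε => xe ε τ - xred τ) (𝓝[>] (0 : ℝ))
        (𝓝 (-(b * y₀ / c) * Real.exp (a * τ)))) ∧
    (b * y₀ ≠ 0 → ∀ T₁ T₂ : ℝ, 0 < T₁ → T₁ < T₂ →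
      (¬ ∀ τ ∈ Set.Icc T₁ T₂,
        Tendsto (fun ε => xe ε τ) (𝓝[>] (0 : ℝ)) (𝓝 (xred τ))) ∧
      ¬ TendstoUniformlyOn (fun ε τ => xe ε τ) xred (𝓝[>] (0 : ℝ)) (Set.Icc T₁ T₂)) := by
  intro xe xred
  have hmain : ∀ τ : ℝ, 0 < τ →
      Tendsto (fun ε => xe ε τ - xred τ) (𝓝[>] (0 : ℝ))
        (𝓝 (-(b * y₀ / c) * Real.exp (a * τ))) := fun τ hτ =>
    stmt15_aux a b c x₀ y₀ hc τ hτ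
  refine ⟨hmain, fun hby T₁ T₂ hT₁ hT₁₂ => ?_⟩
  have key : ∀ τ ∈ Set.Icc T₁ T₂,
      ¬ Tendsto (fun ε => xe ε τ) (𝓝[>] (0 : ℝ)) (𝓝 (xred τ)) := by
    intro τ hτmem htend
    have hτ : 0 < τ := hT₁.trans_le hτmem.1
    have h1 : Tendsto (fun ε => xe ε τ - xred τ) (𝓝[>] (0 : ℝ)) (𝓝 (xred τ - xred τ)) :=
      htend.sub tendsto_const_nhds
    rw [sub_self] at h1
    have hne : (𝓝[>] (0 : ℝ)).NeBot := nhdsGT_neBot 0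
    have := tendsto_nhds_unique h1 (hmain τ hτ)
    have hexp : Real.exp (a * τ) ≠ 0 := (Real.exp_pos _).ne'
    have hne0 : -(b * y₀ / c) * Real.exp (a * τ) ≠ 0 :=
      mul_ne_zero (neg_ne_zero.mpr (div_ne_zero hby hc.ne)) hexp
    exact hne0 this.symm
  constructor
  · intro h
    exact key T₁ ⟨le_refl _, hT₁₂.le⟩ (h T₁ ⟨le_refl _, hT₁₂.le⟩)
  · intro h
    exact key T₁ ⟨le_refl _, hT₁₂.le⟩ (h.tendsto_at ⟨le_refl _, hT₁₂.le⟩)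
end
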